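/- Fix q > 0, γ > 0, 0 < ξ₁ < ξ₂ and A* ∈ ℝ, and define δ(x) = (γ/q)·(ξ₂(e^{−ξ₁(x−A*)} − 1) − ξ₁(e^{−ξ₂(x−A*)} − 1))/(ξ₂ − ξ₁) for x > A*. Then δ(A*+) = 0, δ'(A*+) = 0, δ''(A*+) = −(γ/q)ξ₁ξ₂ < 0, and δ(x) < 0 for all x > A*. -/
import Mathlib


open Filter

lemma expDeriv (c A x : ℝ) :
    HasDerivAt (fun x => Real.exp (c*(x-A))) (c * Real.exp (c*(x-A))) x := by
  have h1 : HasDerivAt (fun x : ℝ => c*(x-A)) (c*1) x :=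
    ((hasDerivAt_id x).sub_const A).const_mul c
  simpa [mul_comm] using h1.exp

/-- δ(x) = (γ/q)(ξ₂(e^{−ξ₁(x−A*)}−1) − ξ₁(e^{−ξ₂(x−A*)}−1))/(ξ₂−ξ₁)
satisfies δ(A*+) = 0, δ'(A*+) = 0, δ''(A*+) = −(γ/q)ξ₁ξ₂ < 0, and δ < 0 on (A*,∞). -/
theorem stmt5 (q γ ξ₁ ξ₂ A : ℝ) (hq : 0 < q) (hγ : 0 < γ)
    (h₁ : 0 < ξ₁) (h₂ : ξ₁ < ξ₂)
    (δ : ℝ → ℝ)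
    (hδ : ∀ x, δ x = (γ/q) * (ξ₂*(Real.exp (-ξ₁*(x-A)) - 1)
        - ξ₁*(Real.exp (-ξ₂*(x-A)) - 1)) / (ξ₂ - ξ₁)) :
    Tendsto δ (nhdsWithin A (Set.Ioi A)) (nhds 0) ∧
    Tendsto (deriv δ) (nhdsWithin A (Set.Ioi A)) (nhds 0) ∧
    Tendsto (deriv (deriv δ)) (nhdsWithin A (Set.Ioi A)) (nhds (-(γ/q)*ξ₁*ξ₂)) ∧
    (-(γ/q)*ξ₁*ξ₂ < 0) ∧
    (∀ x > A, δ x < 0) := by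
  have hδeq : δ = fun x => (γ/q) * (ξ₂*(Real.exp (-ξ₁*(x-A)) - 1)
        - ξ₁*(Real.exp (-ξ₂*(x-A)) - 1)) / (ξ₂ - ξ₁) := funext hδ
  subst hδeq
  have hsub : 0 < ξ₂ - ξ₁ := sub_pos.mpr h₂
  have hgq : 0 < γ/q := div_pos hγ hq
  -- first derivative
  have hD1 : ∀ x, HasDerivAt
      (fun x => (γ/q) * (ξ₂*(Real.exp (-ξ₁*(x-A)) - 1)
        - ξ₁*(Real.exp (-ξ₂*(x-A)) - 1)) / (ξ₂ - ξ₁))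
      ((γ/q) * (ξ₂*(-ξ₁ * Real.exp (-ξ₁*(x-A)))
        - ξ₁*(-ξ₂ * Real.exp (-ξ₂*(x-A)))) / (ξ₂ - ξ₁)) x := by
    intro x
    exact (((((expDeriv (-ξ₁) A x).sub_const 1).const_mul ξ₂).sub
      (((expDeriv (-ξ₂) A x).sub_const 1).const_mul ξ₁)).const_mul (γ/q)).div_const _
  have hderiv1 : deriv (fun x => (γ/q) * (ξ₂*(Real.exp (-ξ₁*(x-A)) - 1)
        - ξ₁*(Real.exp (-ξ₂*(x-A)) - 1)) / (ξ₂ - ξ₁))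
      = fun x => (γ/q) * (ξ₂*(-ξ₁ * Real.exp (-ξ₁*(x-A)))
        - ξ₁*(-ξ₂ * Real.exp (-ξ₂*(x-A)))) / (ξ₂ - ξ₁) :=
    funext fun x => (hD1 x).deriv
  -- second derivative
  have hD2 : ∀ x, HasDerivAt
      (fun x => (γ/q) * (ξ₂*(-ξ₁ * Real.exp (-ξ₁*(x-A)))
        - ξ₁*(-ξ₂ * Real.exp (-ξ₂*(x-A)))) / (ξ₂ - ξ₁))
      ((γ/q) * (ξ₂*(-ξ₁ * (-ξ₁ * Real.exp (-ξ₁*(x-A))))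
        - ξ₁*(-ξ₂ * (-ξ₂ * Real.exp (-ξ₂*(x-A))))) / (ξ₂ - ξ₁)) x := by
    intro x
    exact (((((expDeriv (-ξ₁) A x).const_mul (-ξ₁)).const_mul ξ₂).sub
      (((expDeriv (-ξ₂) A x).const_mul (-ξ₂)).const_mul ξ₁)).const_mul (γ/q)).div_const _
  have hderiv2 : deriv (deriv (fun x => (γ/q) * (ξ₂*(Real.exp (-ξ₁*(x-A)) - 1)
        - ξ₁*(Real.exp (-ξ₂*(x-A)) - 1)) / (ξ₂ - ξ₁)))
      = fun x => (γ/q) * (ξ₂*(-ξ₁ * (-ξ₁ * Real.exp (-ξ₁*(x-A))))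
        - ξ₁*(-ξ₂ * (-ξ₂ * Real.exp (-ξ₂*(x-A))))) / (ξ₂ - ξ₁) := by
    rw [hderiv1]; exact funext fun x => (hD2 x).deriv
  have hcont : ∀ c : ℝ, Continuous (fun x => Real.exp (c*(x-A))) := by
    intro c; fun_prop
  refine ⟨?_, ?_, ?_, ?_, ?_⟩
  · have : Continuous (fun x => (γ/q) * (ξ₂*(Real.exp (-ξ₁*(x-A)) - 1)
        - ξ₁*(Real.exp (-ξ₂*(x-A)) - 1)) / (ξ₂ - ξ₁)) := by fun_prop
    have ht : Tendsto _ (nhdsWithin A (Set.Ioi A)) _ :=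
      (this.tendsto A).mono_left nhdsWithin_le_nhds
    simpa using ht
  · rw [hderiv1]
    have : Continuous (fun x => (γ/q) * (ξ₂*(-ξ₁ * Real.exp (-ξ₁*(x-A)))
        - ξ₁*(-ξ₂ * Real.exp (-ξ₂*(x-A)))) / (ξ₂ - ξ₁)) := by fun_prop
    have ht : Tendsto _ (nhdsWithin A (Set.Ioi A)) _ :=
      (this.tendsto A).mono_left nhdsWithin_le_nhds
    have hv : (γ/q) * (ξ₂*(-ξ₁ * Real.exp (-ξ₁*(A-A)))
        - ξ₁*(-ξ₂ * Real.exp (-ξ₂*(A-A)))) / (ξ₂ - ξ₁) = 0 := by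
      simp only [sub_self, mul_zero, neg_zero, neg_mul, Real.exp_zero, mul_one]
      ring
    rwa [hv] at ht
  · rw [hderiv2]
    have : Continuous (fun x => (γ/q) * (ξ₂*(-ξ₁ * (-ξ₁ * Real.exp (-ξ₁*(x-A))))
        - ξ₁*(-ξ₂ * (-ξ₂ * Real.exp (-ξ₂*(x-A))))) / (ξ₂ - ξ₁)) := by fun_prop
    have ht : Tendsto _ (nhdsWithin A (Set.Ioi A)) _ :=
      (this.tendsto A).mono_left nhdsWithin_le_nhds
    have hv : (γ/q) * (ξ₂*(-ξ₁ * (-ξ₁ * Real.exp (-ξ₁*(A-A))))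
        - ξ₁*(-ξ₂ * (-ξ₂ * Real.exp (-ξ₂*(A-A))))) / (ξ₂ - ξ₁) = -(γ/q)*ξ₁*ξ₂ := by
      simp only [sub_self, mul_zero, neg_mul, Real.exp_zero, mul_one]
      field_simp
      ring
    rwa [hv] at ht
  · have hξ2 : 0 < ξ₂ := h₁.trans h₂
    have : 0 < (γ/q)*ξ₁*ξ₂ := by positivity
    linarith
  · intro x hx
    set g : ℝ → ℝ := fun x => ξ₂*(Real.exp (-ξ₁*(x-A)) - 1)
        - ξ₁*(Real.exp (-ξ₂*(x-A)) - 1) with hg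
    have hganti : StrictAntiOn g (Set.Ici A) := by
      apply strictAntiOn_of_deriv_neg (convex_Ici A)
      · fun_prop
      · intro y hy
        rw [interior_Ici] at hy
        have hdg : HasDerivAt g (ξ₂*(-ξ₁ * Real.exp (-ξ₁*(y-A)))
            - ξ₁*(-ξ₂ * Real.exp (-ξ₂*(y-A)))) y :=
          (((expDeriv (-ξ₁) A y).sub_const 1).const_mul ξ₂).sub
            (((expDeriv (-ξ₂) A y).sub_const 1).const_mul ξ₁)
        rw [hdg.deriv]
        have hy' : 0 < y - A := sub_pos.mpr hy
        have hlt : Real.exp (-ξ₂*(y-A)) < Real.exp (-ξ₁*(y-A)) := by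
          apply Real.exp_lt_exp.mpr
          nlinarith
        have hp : 0 < ξ₁ * ξ₂ := mul_pos h₁ (h₁.trans h₂)
        nlinarith [mul_lt_mul_of_pos_left hlt hp]
    have hgx : g x < g A := hganti Set.self_mem_Ici (le_of_lt hx) hx
    have hgA : g A = 0 := by simp [hg]
    rw [hgA] at hgx
    exact div_neg_of_neg_of_pos (mul_neg_of_pos_of_neg hgq hgx) hsub
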